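/- (Miranda's theorem, two-dimensional rectangle version) Let t < T and F = (F_1, F_2) : [t,T]² → ℝ² be continuous. Suppose for each i ∈ {1,2}: F_i(x) > 0 whenever x_i = t, and F_i(x) < 0 whenever x_i = T. Then there exists x ∈ [t,T]² with F(x) = 0. -/
import Mathlib

open Finset

/-- A "door" between two labels: exactly the pair {1,2}. -/
def mirDoor (a b : ℕ) : ZMod 2 := if (a = 1 ∧ b = 2) ∨ (a = 2 ∧ b = 1) then 1 else 0

lemma zmod2_add_self : ∀ x : ZMod 2, x + x = 0 := by decide

lemma zmod2_cases : ∀ x : ZMod 2, x = 0 ∨ x = 1 := by decide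

lemma mirDoor_ne_two {a b : ℕ} (ha : a ≠ 2) (hb : b ≠ 2) : mirDoor a b = 0 := by
  rw [mirDoor, if_neg]; rintro (⟨h1, h2⟩ | ⟨h1, h2⟩)
  · exact hb h2
  · exact ha h1

lemma mirDoor_ne_one {a b : ℕ} (ha : a ≠ 1) (hb : b ≠ 1) : mirDoor a b = 0 := by
  rw [mirDoor, if_neg]; rintro (⟨h1, h2⟩ | ⟨h1, h2⟩)
  · exact ha h1
  · exact hb h2

lemma mir_tri_of_door {a b c : ℕ}
    (ha : a = 1 ∨ a = 2 ∨ a = 3) (hb : b = 1 ∨ b = 2 ∨ b = 3) (hc : c = 1 ∨ c = 2 ∨ c = 3)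
    (h : mirDoor a b + mirDoor b c + mirDoor a c = 1) :
    (a = 1 ∨ b = 1 ∨ c = 1) ∧ (a = 2 ∨ b = 2 ∨ c = 2) ∧ (a = 3 ∨ b = 3 ∨ c = 3) := by
  rcases ha with rfl | rfl | rfl <;> rcases hb with rfl | rfl | rfl <;>
    rcases hc with rfl | rfl | rfl <;> revert h <;> decide

lemma mir_tele (u : ℕ → ZMod 2) (n : ℕ) :
    ∑ i ∈ range n, (u i + u (i + 1)) = u 0 + u n := by
  induction n with
  | zero => simp [(zmod2_add_self (u 0)).symm]
  | succ n ih =>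
    rw [Finset.sum_range_succ, ih]
    linear_combination zmod2_add_self (u n)

lemma mir_grid_sum (H V : ℕ → ℕ → ZMod 2) (n : ℕ) :
    ∑ i ∈ range n, ∑ j ∈ range n, ((H i j + H i (j + 1)) + (V i j + V (i + 1) j))
      = (∑ i ∈ range n, (H i 0 + H i n)) + (∑ j ∈ range n, (V 0 j + V n j)) := by
  calc ∑ i ∈ range n, ∑ j ∈ range n, ((H i j + H i (j + 1)) + (V i j + V (i + 1) j))
      = ∑ i ∈ range n, (∑ j ∈ range n, (H i j + H i (j + 1))
          + ∑ j ∈ range n, (V i j + V (i + 1) j)) :=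
        Finset.sum_congr rfl fun i _ => Finset.sum_add_distrib
    _ = ∑ i ∈ range n, ∑ j ∈ range n, (H i j + H i (j + 1))
          + ∑ i ∈ range n, ∑ j ∈ range n, (V i j + V (i + 1) j) := Finset.sum_add_distrib
    _ = (∑ i ∈ range n, (H i 0 + H i n)) + (∑ j ∈ range n, (V 0 j + V n j)) := by
        congr 1
        · exact Finset.sum_congr rfl fun i _ => mir_tele (H i) n
        · rw [Finset.sum_comm]
          exact Finset.sum_congr rfl fun j _ => mir_tele (fun i => V i j) n

/-- Discrete Miranda: combinatorial core. -/
lemma mir_discrete (n : ℕ) (hn : 0 < n) (L : ℕ → ℕ → ℕ)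
    (hrange : ∀ i j, L i j = 1 ∨ L i j = 2 ∨ L i j = 3)
    (hbot : ∀ i ≤ n, L i 0 ≠ 2) (htop : ∀ i ≤ n, L i n ≠ 3)
    (hleft : ∀ j ≤ n, L 0 j ≠ 1) (hright : ∀ j ≤ n, L n j = 1) :
    ∃ i j, i < n ∧ j < n ∧
      (∃ p : ℕ × ℕ, (p.1 = i ∨ p.1 = i + 1) ∧ (p.2 = j ∨ p.2 = j + 1) ∧ L p.1 p.2 = 1) ∧
      (∃ p : ℕ × ℕ, (p.1 = i ∨ p.1 = i + 1) ∧ (p.2 = j ∨ p.2 = j + 1) ∧ L p.1 p.2 = 2) ∧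
      (∃ p : ℕ × ℕ, (p.1 = i ∨ p.1 = i + 1) ∧ (p.2 = j ∨ p.2 = j + 1) ∧ L p.1 p.2 = 3) := by
  by_contra hcon
  push_neg at hcon
  -- per-cell: both triangles have door-sum 0
  have hcell : ∀ i < n, ∀ j < n,
      ((mirDoor (L i j) (L (i+1) j) + mirDoor (L (i+1) j) (L (i+1) (j+1))
          + mirDoor (L i j) (L (i+1) (j+1)))
        + (mirDoor (L i j) (L i (j+1)) + mirDoor (L i (j+1)) (L (i+1) (j+1))
          + mirDoor (L i j) (L (i+1) (j+1)))) = 0 := by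
    intro i hi j hj
    have mk1 : ∀ v : ℕ, (L i j = v ∨ L (i+1) j = v ∨ L (i+1) (j+1) = v) →
        ∃ p : ℕ × ℕ, (p.1 = i ∨ p.1 = i + 1) ∧ (p.2 = j ∨ p.2 = j + 1) ∧ L p.1 p.2 = v := by
      rintro v (h | h | h)
      exacts [⟨(i, j), Or.inl rfl, Or.inl rfl, h⟩,
        ⟨(i+1, j), Or.inr rfl, Or.inl rfl, h⟩,
        ⟨(i+1, j+1), Or.inr rfl, Or.inr rfl, h⟩]
    have mk2 : ∀ v : ℕ, (L i j = v ∨ L i (j+1) = v ∨ L (i+1) (j+1) = v) →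
        ∃ p : ℕ × ℕ, (p.1 = i ∨ p.1 = i + 1) ∧ (p.2 = j ∨ p.2 = j + 1) ∧ L p.1 p.2 = v := by
      rintro v (h | h | h)
      exacts [⟨(i, j), Or.inl rfl, Or.inl rfl, h⟩,
        ⟨(i, j+1), Or.inl rfl, Or.inr rfl, h⟩,
        ⟨(i+1, j+1), Or.inr rfl, Or.inr rfl, h⟩]
    have h1 : mirDoor (L i j) (L (i+1) j) + mirDoor (L (i+1) j) (L (i+1) (j+1))
        + mirDoor (L i j) (L (i+1) (j+1)) = 0 := by
      rcases zmod2_cases (mirDoor (L i j) (L (i+1) j) + mirDoor (L (i+1) j) (L (i+1) (j+1))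
        + mirDoor (L i j) (L (i+1) (j+1))) with h | h
      · exact h
      · exfalso
        obtain ⟨c1, c2, c3⟩ := mir_tri_of_door (hrange i j) (hrange (i+1) j)
          (hrange (i+1) (j+1)) h
        obtain ⟨p, hp1, hp2, hp3⟩ := mk1 3 c3
        exact hcon i j hi hj (mk1 1 c1) (mk1 2 c2) p hp1 hp2 hp3
    have h2 : mirDoor (L i j) (L i (j+1)) + mirDoor (L i (j+1)) (L (i+1) (j+1))
        + mirDoor (L i j) (L (i+1) (j+1)) = 0 := by
      rcases zmod2_cases (mirDoor (L i j) (L i (j+1)) + mirDoor (L i (j+1)) (L (i+1) (j+1))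
        + mirDoor (L i j) (L (i+1) (j+1))) with h | h
      · exact h
      · exfalso
        obtain ⟨c1, c2, c3⟩ := mir_tri_of_door (hrange i j) (hrange i (j+1))
          (hrange (i+1) (j+1)) h
        obtain ⟨p, hp1, hp2, hp3⟩ := mk2 3 c3
        exact hcon i j hi hj (mk2 1 c1) (mk2 2 c2) p hp1 hp2 hp3
    rw [h1, h2, add_zero]
  have S0 : ∑ i ∈ range n, ∑ j ∈ range n,
      ((mirDoor (L i j) (L (i+1) j) + mirDoor (L (i+1) j) (L (i+1) (j+1))
          + mirDoor (L i j) (L (i+1) (j+1)))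
        + (mirDoor (L i j) (L i (j+1)) + mirDoor (L i (j+1)) (L (i+1) (j+1))
          + mirDoor (L i j) (L (i+1) (j+1)))) = 0 :=
    Finset.sum_eq_zero fun i hi => Finset.sum_eq_zero fun j hj =>
      hcell i (mem_range.1 hi) j (mem_range.1 hj)
  have S1 : ∑ i ∈ range n, ∑ j ∈ range n,
      ((mirDoor (L i j) (L (i+1) j) + mirDoor (L (i+1) j) (L (i+1) (j+1))
          + mirDoor (L i j) (L (i+1) (j+1)))
        + (mirDoor (L i j) (L i (j+1)) + mirDoor (L i (j+1)) (L (i+1) (j+1))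
          + mirDoor (L i j) (L (i+1) (j+1)))) = 1 := by
    have step1 : ∑ i ∈ range n, ∑ j ∈ range n,
        ((mirDoor (L i j) (L (i+1) j) + mirDoor (L (i+1) j) (L (i+1) (j+1))
            + mirDoor (L i j) (L (i+1) (j+1)))
          + (mirDoor (L i j) (L i (j+1)) + mirDoor (L i (j+1)) (L (i+1) (j+1))
            + mirDoor (L i j) (L (i+1) (j+1))))
        = ∑ i ∈ range n, ∑ j ∈ range n,
          ((mirDoor (L i j) (L (i+1) j) + mirDoor (L i (j+1)) (L (i+1) (j+1)))
            + (mirDoor (L i j) (L i (j+1)) + mirDoor (L (i+1) j) (L (i+1) (j+1)))) := by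
      refine Finset.sum_congr rfl fun i _ => Finset.sum_congr rfl fun j _ => ?_
      linear_combination zmod2_add_self (mirDoor (L i j) (L (i+1) (j+1)))
    rw [step1]
    rw [mir_grid_sum (fun i j => mirDoor (L i j) (L (i+1) j))
      (fun i j => mirDoor (L i j) (L i (j+1))) n]
    -- bottom row and both vertical sides vanish; top row has odd parity
    have hbot0 : ∑ i ∈ range n, ((fun i j => mirDoor (L i j) (L (i+1) j)) i 0
        + (fun i j => mirDoor (L i j) (L (i+1) j)) i n)
        = ∑ i ∈ range n, ((if L i n = 2 then (1 : ZMod 2) else 0)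
          + (if L (i+1) n = 2 then (1 : ZMod 2) else 0)) := by
      refine Finset.sum_congr rfl fun i hi => ?_
      have hi' := mem_range.1 hi
      have e0 : mirDoor (L i 0) (L (i+1) 0) = 0 :=
        mirDoor_ne_two (hbot i (by omega)) (hbot (i+1) (by omega))
      have ha : L i n = 1 ∨ L i n = 2 := by
        have := hrange i n; have := htop i (by omega); tauto
      have hb : L (i+1) n = 1 ∨ L (i+1) n = 2 := by
        have := hrange (i+1) n; have := htop (i+1) (by omega); tauto
      simp only [e0, zero_add]
      rcases ha with ha | ha <;> rcases hb with hb | hb <;>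
        simp [mirDoor, ha, hb] <;> decide
    have hside0 : ∑ j ∈ range n, ((fun i j => mirDoor (L i j) (L i (j+1))) 0 j
        + (fun i j => mirDoor (L i j) (L i (j+1))) n j) = 0 := by
      refine Finset.sum_eq_zero fun j hj => ?_
      have hj' := mem_range.1 hj
      have e1 : mirDoor (L 0 j) (L 0 (j+1)) = 0 :=
        mirDoor_ne_one (hleft j (by omega)) (hleft (j+1) (by omega))
      have e2 : mirDoor (L n j) (L n (j+1)) = 0 := by
        rw [hright j (by omega), hright (j+1) (by omega)]; decide
      simp [e1, e2]
    rw [hbot0, hside0, add_zero]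
    rw [mir_tele (fun i => if L i n = 2 then (1 : ZMod 2) else 0) n]
    have e0 : L 0 n = 2 := by
      have := hrange 0 n; have := htop 0 (by omega); have := hleft n le_rfl; tauto
    have en : L n n = 1 := hright n le_rfl
    simp [e0, en]
  rw [S0] at S1
  exact absurd S1 (by decide)

/-- Miranda's theorem on a square (strict boundary conditions). -/
theorem stmt_6 (t T : ℝ) (htT : t < T)
    (F : (Fin 2 → ℝ) → (Fin 2 → ℝ))
    (hF : ContinuousOn F (Set.univ.pi fun _ : Fin 2 => Set.Icc t T))
    (hlow : ∀ x ∈ Set.univ.pi fun _ : Fin 2 => Set.Icc t T,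
      ∀ i : Fin 2, x i = t → 0 < F x i)
    (hhigh : ∀ x ∈ Set.univ.pi fun _ : Fin 2 => Set.Icc t T,
      ∀ i : Fin 2, x i = T → F x i < 0) :
    ∃ x ∈ Set.univ.pi fun _ : Fin 2 => Set.Icc t T, F x = 0 := by
  set K : Set (Fin 2 → ℝ) := Set.univ.pi fun _ : Fin 2 => Set.Icc t T with hK
  have hKc : IsCompact K := isCompact_univ_pi fun _ => isCompact_Icc
  have hKne : K.Nonempty := ⟨fun _ => t, by
    rw [hK, Set.mem_univ_pi]; intro k; exact ⟨le_refl t, le_of_lt htT⟩⟩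
  -- the function to minimize
  have hg : ContinuousOn (fun x => max |F x 0| |F x 1|) K := by
    have hc : Continuous fun y : Fin 2 → ℝ => max |y 0| |y 1| :=
      ((continuous_apply (0 : Fin 2)).abs).max ((continuous_apply (1 : Fin 2)).abs)
    exact hc.comp_continuousOn hF
  obtain ⟨x₀, hx₀K, hmin⟩ := hKc.exists_isMinOn hKne hg
  rw [isMinOn_iff] at hmin
  have huc := hKc.uniformContinuousOn_of_continuous hF
  rw [Metric.uniformContinuousOn_iff] at huc
  -- main claim: the min value is < ε for every ε > 0
  have key : ∀ ε > 0, max |F x₀ 0| |F x₀ 1| < ε := by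
    intro ε hε
    obtain ⟨δ, hδ, hucδ⟩ := huc ε hε
    obtain ⟨n, hnn⟩ := exists_nat_gt (max 1 ((T - t) / δ))
    have hn1 : (1 : ℝ) < n := lt_of_le_of_lt (le_max_left _ _) hnn
    have hn0 : 0 < n := by exact_mod_cast lt_trans zero_lt_one hn1
    have hn0' : (0 : ℝ) < n := lt_trans zero_lt_one hn1
    set h : ℝ := (T - t) / n with hh
    have h0 : 0 ≤ h := div_nonneg (by linarith) (le_of_lt hn0')
    have hhδ : h < δ := by
      rw [hh, div_lt_iff₀ hn0']
      have := lt_of_le_of_lt (le_max_right 1 ((T - t) / δ)) hnn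
      calc T - t < δ * n := by
            rw [div_lt_iff₀ hδ] at this; linarith [this]
        _ = δ * n := rfl
    have hnh : (n : ℝ) * h = T - t := by
      rw [hh, mul_comm, div_mul_cancel₀]
      exact ne_of_gt hn0'
    -- the grid
    set v : ℕ → ℕ → (Fin 2 → ℝ) := fun i j k => if k = 0 then t + i * h else t + j * h
      with hv
    have hvmem : ∀ i j : ℕ, i ≤ n → j ≤ n → v i j ∈ K := by
      intro i j hi hj
      rw [hK, Set.mem_univ_pi]
      intro k
      have hb : ∀ m : ℕ, m ≤ n → t + m * h ∈ Set.Icc t T := by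
        intro m hm
        constructor
        · nlinarith [mul_nonneg (Nat.cast_nonneg (α := ℝ) m) h0]
        · have : (m : ℝ) * h ≤ (n : ℝ) * h :=
            mul_le_mul_of_nonneg_right (by exact_mod_cast hm) h0
          nlinarith [this]
      by_cases hk : k = 0 <;> simp only [hv, hk, if_true, if_false, reduceIte] <;>
        [exact hb i hi; exact hb j hj]
    have hv0 : ∀ i j : ℕ, v i j 0 = t + i * h := fun i j => by simp [hv]
    have hv1 : ∀ i j : ℕ, v i j 1 = t + j * h := fun i j => by simp [hv]
    -- labels
    set L : ℕ → ℕ → ℕ := fun i j =>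
      if F (v i j) 0 < 0 then 1 else if F (v i j) 1 < 0 then 2 else 3 with hL
    have hrange : ∀ i j, L i j = 1 ∨ L i j = 2 ∨ L i j = 3 := by
      intro i j; simp only [hL]; split_ifs <;> tauto
    have hbot : ∀ i ≤ n, L i 0 ≠ 2 := by
      intro i hi
      have hpos : 0 < F (v i 0) 1 := by
        apply hlow (v i 0) (hvmem i 0 hi (Nat.zero_le n)) 1
        rw [hv1]; simp
      simp only [hL]; split_ifs with h1 h2
      · norm_num
      · exact absurd h2 (by linarith)
      · norm_num
    have htop : ∀ i ≤ n, L i n ≠ 3 := by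
      intro i hi
      have hneg : F (v i n) 1 < 0 := by
        apply hhigh (v i n) (hvmem i n hi le_rfl) 1
        rw [hv1, hnh]; ring
      simp only [hL]; split_ifs with h1
      · norm_num
      · norm_num
    have hleft : ∀ j ≤ n, L 0 j ≠ 1 := by
      intro j hj
      have hpos : 0 < F (v 0 j) 0 := by
        apply hlow (v 0 j) (hvmem 0 j (Nat.zero_le n) hj) 0
        rw [hv0]; simp
      simp only [hL]; split_ifs with h1 h2
      · exact absurd h1 (by linarith)
      · norm_num
      · norm_num
    have hright : ∀ j ≤ n, L n j = 1 := by
      intro j hj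
      have hneg : F (v n j) 0 < 0 := by
        apply hhigh (v n j) (hvmem n j le_rfl hj) 0
        rw [hv0, hnh]; ring
      simp only [hL]; rw [if_pos hneg]
    obtain ⟨i, j, hi, hj, ⟨p, hp1, hp2, hpL⟩, ⟨q, hq1, hq2, hqL⟩, ⟨r, hr1, hr2, hrL⟩⟩ :=
      mir_discrete n hn0 L hrange hbot htop hleft hright
    -- decode labels
    have hpF : F (v p.1 p.2) 0 < 0 := by
      simp only [hL] at hpL; split_ifs at hpL with h1 h2
      · exact h1
      · exact absurd hpL (by norm_num)
      · exact absurd hpL (by norm_num)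
    have hqF : F (v q.1 q.2) 1 < 0 := by
      simp only [hL] at hqL; split_ifs at hqL with h1 h2
      · exact absurd hqL (by norm_num)
      · exact h2
      · exact absurd hqL (by norm_num)
    have hrF0 : 0 ≤ F (v r.1 r.2) 0 := by
      simp only [hL] at hrL; split_ifs at hrL with h1 h2
      · exact absurd hrL (by norm_num)
      · exact absurd hrL (by norm_num)
      · linarith
    have hrF1 : 0 ≤ F (v r.1 r.2) 1 := by
      simp only [hL] at hrL; split_ifs at hrL with h1 h2
      · exact absurd hrL (by norm_num)
      · exact absurd hrL (by norm_num)
      · linarith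
    -- distance bounds
    have coordbound : ∀ a b : ℕ, a ≤ b + 1 → b ≤ a + 1 → |(t + a * h) - (t + b * h)| ≤ h := by
      intro a b hab hba
      have e : (t + a * h) - (t + b * h) = ((a : ℝ) - b) * h := by ring
      rw [e, abs_mul, abs_of_nonneg h0]
      have hab' : (a : ℝ) - b ≤ 1 := by
        have : (a : ℝ) ≤ (b : ℝ) + 1 := by exact_mod_cast hab
        linarith
      have hba' : (b : ℝ) - a ≤ 1 := by
        have : (b : ℝ) ≤ (a : ℝ) + 1 := by exact_mod_cast hba
        linarith
      have : |(a : ℝ) - b| ≤ 1 := abs_sub_le_iff.2 ⟨hab', hba'⟩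
      nlinarith [abs_nonneg ((a : ℝ) - b)]
    have hdist : ∀ a b : ℕ × ℕ,
        (a.1 = i ∨ a.1 = i + 1) → (a.2 = j ∨ a.2 = j + 1) →
        (b.1 = i ∨ b.1 = i + 1) → (b.2 = j ∨ b.2 = j + 1) →
        dist (v a.1 a.2) (v b.1 b.2) ≤ h := by
      intro a b ha1 ha2 hb1 hb2
      rw [dist_pi_le_iff h0]
      intro k
      by_cases hk : k = 0
      · subst hk
        rw [hv0, hv0, Real.dist_eq]
        exact coordbound a.1 b.1 (by omega) (by omega)
      · have hk1 : k = 1 := by omega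
        subst hk1
        rw [hv1, hv1, Real.dist_eq]
        exact coordbound a.2 b.2 (by omega) (by omega)
    have hmemc : ∀ a : ℕ × ℕ, (a.1 = i ∨ a.1 = i + 1) → (a.2 = j ∨ a.2 = j + 1) →
        v a.1 a.2 ∈ K := fun a ha1 ha2 => hvmem a.1 a.2 (by omega) (by omega)
    have hpr : dist (F (v p.1 p.2)) (F (v r.1 r.2)) < ε :=
      hucδ _ (hmemc p hp1 hp2) _ (hmemc r hr1 hr2)
        (lt_of_le_of_lt (hdist p r hp1 hp2 hr1 hr2) hhδ)
    have hqr : dist (F (v q.1 q.2)) (F (v r.1 r.2)) < ε :=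
      hucδ _ (hmemc q hq1 hq2) _ (hmemc r hr1 hr2)
        (lt_of_le_of_lt (hdist q r hq1 hq2 hr1 hr2) hhδ)
    have h0' : |F (v r.1 r.2) 0| < ε := by
      have := dist_le_pi_dist (F (v p.1 p.2)) (F (v r.1 r.2)) 0
      rw [Real.dist_eq] at this
      rw [abs_of_nonneg hrF0]
      have := abs_sub_le_iff.1 (le_trans this (le_of_lt hpr))
      linarith [this.2]
    have h1' : |F (v r.1 r.2) 1| < ε := by
      have := dist_le_pi_dist (F (v q.1 q.2)) (F (v r.1 r.2)) 1
      rw [Real.dist_eq] at this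
      rw [abs_of_nonneg hrF1]
      have := abs_sub_le_iff.1 (le_trans this (le_of_lt hqr))
      linarith [this.2]
    calc max |F x₀ 0| |F x₀ 1| ≤ max |F (v r.1 r.2) 0| |F (v r.1 r.2) 1| :=
          hmin _ (hmemc r hr1 hr2)
      _ < ε := max_lt h0' h1'
  -- conclude
  have hge : 0 ≤ max |F x₀ 0| |F x₀ 1| := le_trans (abs_nonneg _) (le_max_left _ _)
  have heq : max |F x₀ 0| |F x₀ 1| = 0 := by
    by_contra hne
    have hpos : 0 < max |F x₀ 0| |F x₀ 1| := lt_of_le_of_ne hge (Ne.symm hne)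
    exact absurd (key _ hpos) (lt_irrefl _)
  have h0 : F x₀ 0 = 0 := by
    have := le_trans (le_max_left |F x₀ 0| |F x₀ 1|) (le_of_eq heq)
    exact abs_eq_zero.1 (le_antisymm this (abs_nonneg _))
  have h1 : F x₀ 1 = 0 := by
    have := le_trans (le_max_right |F x₀ 0| |F x₀ 1|) (le_of_eq heq)
    exact abs_eq_zero.1 (le_antisymm this (abs_nonneg _))
  refine ⟨x₀, hx₀K, ?_⟩
  funext k
  have hall : ∀ k : Fin 2, F x₀ k = 0 := Fin.forall_fin_two.mpr ⟨h0, h1⟩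
  simpa using hall k
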